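/- Let P = {X_i : i ∈ I} be a partition of an arbitrary set X and f ∈ Γ(X,P). Then f is regular in Γ(X,P) (there exists g ∈ Γ(X,P) with f = f∘g∘f) if and only if for every j in the image of χ^(f) there exists i ∈ I such that f restricted to X_i is an injective map from X_i onto X_j. -/

import Mathlib

/-- `B : ι → Set X` is a partition of `X` into nonempty pairwise disjoint blocks. -/
def IsPartition {X ι : Type*} (B : ι → Set X) : Prop :=
  (∀ i, (B i).Nonempty) ∧ (Pairwise fun i j => Disjoint (B i) (B j)) ∧ (⋃ i, B i) = Set.univ

/-- membership in `T(X,P)`: every block maps into some block. -/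
def MapsInto {X ι : Type*} (B : ι → Set X) (f : X → X) : Prop := ∀ i, ∃ j, f '' B i ⊆ B j

/-- membership in `Γ(X,P)`: every block maps onto some block. -/
def MapsOnto {X ι : Type*} (B : ι → Set X) (f : X → X) : Prop := ∀ i, ∃ j, f '' B i = B j

/-- membership in `Σ(X,P)`. -/
def InSigma {X ι : Type*} (B : ι → Set X) (f : X → X) : Prop :=
  MapsInto B f ∧ ∀ i, (Set.range f ∩ B i).Nonempty

/-- membership in `S(X,P)`, the group of units of `T(X,P)`. -/
def IsUnitT {X ι : Type*} (B : ι → Set X) (f : X → X) : Prop :=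
  MapsInto B f ∧ ∃ g, MapsInto B g ∧ f ∘ g = id ∧ g ∘ f = id

/-- Stirling numbers of the second kind. -/
def stirling2 : ℕ → ℕ → ℕ
  | 0, 0 => 1
  | 0, _ + 1 => 0
  | _ + 1, 0 => 0
  | n + 1, k + 1 => (k + 1) * stirling2 n (k + 1) + stirling2 n k

/-!
If `f ∘ g ∘ f = f`, then `f ∘ g` is the identity on `range f`; hence for an image block `X_j`,
`f` maps the block `g(X_j)` back onto `X_j` and is injective there. Conversely, pick for every
image block `X_j` a block `X_i` that `f` maps injectively onto it. Since distinct image blocks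
are disjoint, `f` is injective on the union `S` of the chosen blocks, and `f(S) = range f`. Take
`g = (f|_S)⁻¹ ∘ t`, where `t` is the identity on `range f` (a union of blocks) and `f` on the
other blocks: `t` maps every block onto an image block `X_j`, which `(f|_S)⁻¹` maps onto the
block chosen for `X_j`, and `f ∘ g ∘ f = f` because `t` fixes `range f`.
-/
open Set Function

namespace IsPartition

variable {X ι : Type*} {B : ι → Set X}

lemma exists_mem (hP : IsPartition B) (x : X) : ∃ i, x ∈ B i :=
  mem_iUnion.1 (hP.2.2 ▸ mem_univ x)

lemma eq_of_mem (hP : IsPartition B) {x : X} {i j : ι} (hi : x ∈ B i) (hj : x ∈ B j) :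
    i = j := by
  by_contra hij
  exact disjoint_left.1 (hP.2.1 hij) hi hj

lemma exists_image_piecewise_range_eq (hP : IsPartition B) {f : X → X}
    [DecidablePred (· ∈ range f)] (hf : MapsOnto B f) (j : ι) :
    ∃ k, (∃ l, f '' B l = B k) ∧ (range f).piecewise id f '' B j = B k := by
  by_cases hj : ∃ l, f '' B l = B j
  · obtain ⟨l, hl⟩ := hj
    have hsub : B j ⊆ range f := hl ▸ image_subset_range f (B l)
    exact ⟨j, ⟨l, hl⟩, ((piecewise_eqOn (range f) id f).mono hsub).image_eq.trans (image_id _)⟩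
  · have hsub : B j ⊆ (range f)ᶜ := by
      rintro _ hx ⟨z, rfl⟩
      obtain ⟨l, hzl⟩ := hP.exists_mem z
      obtain ⟨m, hm⟩ := hf l
      exact hj ⟨l, hP.eq_of_mem (hm ▸ mem_image_of_mem f hzl) hx ▸ hm⟩
    obtain ⟨k, hk⟩ := hf j
    exact ⟨k, ⟨j, hk⟩, ((piecewise_eqOn_compl (range f) id f).mono hsub).image_eq.trans hk⟩

end IsPartition

lemma Set.injOn_biUnion_of_pairwiseDisjoint_image {α β ι : Type*} {f : α → β} {s : ι → Set α}
    {J : Set ι} (hinj : ∀ k ∈ J, InjOn f (s k)) (hdisj : J.PairwiseDisjoint fun k => f '' s k) :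
    InjOn f (⋃ k ∈ J, s k) := by
  intro x hx y hy hxy
  obtain ⟨a, ha, hxa⟩ := mem_iUnion₂.1 hx
  obtain ⟨b, hb, hyb⟩ := mem_iUnion₂.1 hy
  obtain rfl : a = b :=
    hdisj.elim_set ha hb (f x) (mem_image_of_mem f hxa) (hxy ▸ mem_image_of_mem f hyb)
  exact hinj a ha hxa hyb hxy

section Regular

variable {X ι : Type*} {B : ι → Set X} {f : X → X}

lemma exists_injOn_image_eq_of_comp_comp_eq {g : X → X} (hg : MapsOnto B g)
    (hfgf : f ∘ g ∘ f = f) {j l : ι} (hl : f '' B l = B j) :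
    ∃ i, f '' B i = B j ∧ InjOn f (B i) := by
  obtain ⟨k, hk⟩ := hg j
  have hinv : LeftInvOn f g (B j) := by
    rw [← hl]
    rintro _ ⟨x, -, rfl⟩
    exact congrFun hfgf x
  exact ⟨k, hk ▸ hinv.image_image, hk ▸ LeftInvOn.injOn hinv.rightInvOn_image⟩

lemma exists_comp_comp_eq_of_injOn (hP : IsPartition B) (hf : MapsOnto B f)
    (h : ∀ j, (∃ l, f '' B l = B j) → ∃ i, f '' B i = B j ∧ InjOn f (B i)) :
    ∃ g, MapsOnto B g ∧ f ∘ g ∘ f = f := by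
  rcases isEmpty_or_nonempty X with hX | hX
  · exact ⟨f, hf, funext isEmptyElim⟩
  classical
  choose! I hI using h
  set J := {k | ∃ l, f '' B l = B k}
  set S := ⋃ k ∈ J, B (I k)
  have hIS : ∀ {k}, k ∈ J → B (I k) ⊆ S := fun hk =>
    subset_biUnion_of_mem (u := fun k => B (I k)) hk
  have hS : InjOn f S := injOn_biUnion_of_pairwiseDisjoint_image (fun k hk => (hI k hk).2)
    fun a ha b hb hab => by
      simp only [onFun, (hI a ha).1, (hI b hb).1]
      exact hP.2.1 hab
  have hrange : range f ⊆ f '' S := by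
    rintro _ ⟨x, rfl⟩
    obtain ⟨l, hxl⟩ := hP.exists_mem x
    obtain ⟨m, hm⟩ := hf l
    have hfx : f x ∈ f '' B (I m) := (hI m ⟨l, hm⟩).1 ▸ hm ▸ mem_image_of_mem f hxl
    exact image_mono (hIS ⟨l, hm⟩) hfx
  refine ⟨invFunOn f S ∘ (range f).piecewise id f, fun j => ?_, funext fun x => ?_⟩
  · obtain ⟨k, hk, hjk⟩ := hP.exists_image_piecewise_range_eq hf j
    refine ⟨I k, ?_⟩
    rw [image_comp, hjk, ← (hI k hk).1]
    exact hS.leftInvOn_invFunOn.image_image' (hIS hk)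
  · simp only [comp_apply, piecewise_eq_of_mem _ _ _ (mem_range_self x), id_eq]
    exact invFunOn_eq (hrange (mem_range_self x))

end Regular

/-- Characterization of regular elements of Γ(X,P) for an arbitrary set X. -/
theorem gamma_regular_iff {X ι : Type*} (B : ι → Set X) (hP : IsPartition B)
    (f : X → X) (hf : MapsOnto B f) :
    (∃ g, MapsOnto B g ∧ f ∘ g ∘ f = f) ↔
      ∀ j, (∃ l, f '' B l = B j) → ∃ i, f '' B i = B j ∧ Set.InjOn f (B i) :=
  ⟨fun ⟨_, hg, hfgf⟩ _ ⟨_, hl⟩ => exists_injOn_image_eq_of_comp_comp_eq hg hfgf hl,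
    exists_comp_comp_eq_of_injOn hP hf⟩
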